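/- arXiv:1607.02767 — 3 statements merged into one kernel-verified Lean document; each statement's English description precedes it below -/
import Mathlib

section
/- Let c > 0 and α ∈ (0,1). If V : ℝ≥0 → ℝ≥0 is differentiable and satisfies V'(t) ≤ -c·V(t)^α whenever V(t) > 0, then V reaches zero in finite time; more precisely V(t) = 0 for all t ≥ V(0)^(1-α) / (c(1-α)). -/
/-!
Along an interval where `V > 0`, the chain rule turns `V' ≤ -c V ^ α` into
`(V ^ (1 - α) + c (1 - α) t)' ≤ 0`. If `V t > 0` for some `t` past the bound, go back from `t`
to the last zero `s` of `V` before it (or to `s = 0` if there is none): at `s` the quantity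
`V ^ (1 - α) + c (1 - α) s` is at most `c (1 - α) t`, which forces `V t ^ (1 - α) ≤ 0`.
-/

open Set

theorem antitoneOn_rpow_add_mul_of_deriv_le {V : ℝ → ℝ} {a b c α : ℝ} (hα : α ≤ 1)
    (hcont : ContinuousOn V (Icc a b)) (hdiff : DifferentiableOn ℝ V (Ioo a b))
    (hpos : ∀ u ∈ Ioo a b, 0 < V u) (hineq : ∀ u ∈ Ioo a b, deriv V u ≤ -c * V u ^ α) :
    AntitoneOn (fun t => V t ^ (1 - α) + c * (1 - α) * t) (Icc a b) := by
  have hβ : 0 ≤ 1 - α := by linarith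
  have hderiv : ∀ u ∈ Ioo a b, HasDerivAt (fun t => V t ^ (1 - α) + c * (1 - α) * t)
      (deriv V u * (1 - α) * V u ^ (-α) + c * (1 - α)) u := fun u hu => by
    have hV := (hdiff.differentiableAt (Ioo_mem_nhds hu.1 hu.2)).hasDerivAt.rpow_const
      (p := 1 - α) (Or.inl (hpos u hu).ne')
    simpa using hV.fun_add ((hasDerivAt_id' u).const_mul (c * (1 - α)))
  refine antitoneOn_of_deriv_nonpos (convex_Icc a b)
    ((hcont.rpow_const fun _ _ => Or.inr hβ).add (continuousOn_const.mul continuousOn_id))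
    ?_ ?_ <;> rw [interior_Icc]
  · exact fun u hu => (hderiv u hu).differentiableAt.differentiableWithinAt
  · intro u hu
    rw [(hderiv u hu).deriv]
    have hVu := hpos u hu
    have hcancel : V u ^ α * V u ^ (-α) = 1 := by
      rw [← Real.rpow_add hVu, add_neg_cancel, Real.rpow_zero]
    have hweight : 0 ≤ (1 - α) * V u ^ (-α) := by positivity
    linear_combination mul_le_mul_of_nonneg_right (hineq u hu) hweight - c * (1 - α) * hcancel

theorem exists_eq_left_or_eq_zero_forall_Ioo_ne_zero {V : ℝ → ℝ} (hV : Continuous V) {a b : ℝ}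
    (hab : a ≤ b) : ∃ s ∈ Icc a b, (s = a ∨ V s = 0) ∧ ∀ u ∈ Ioo s b, V u ≠ 0 := by
  have hclosed : IsClosed (Icc a b ∩ ({a} ∪ V ⁻¹' {0})) :=
    isClosed_Icc.inter (isClosed_singleton.union (isClosed_singleton.preimage hV))
  obtain ⟨s, ⟨hs, hs'⟩, hmax⟩ := (isCompact_Icc.of_isClosed_subset hclosed inter_subset_left
    |>.exists_isGreatest ⟨a, ⟨left_mem_Icc.2 hab, Or.inl rfl⟩⟩)
  refine ⟨s, hs, hs', fun u hu hVu => hu.1.not_ge (hmax ⟨?_, Or.inr hVu⟩)⟩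
  exact ⟨hs.1.trans hu.1.le, hu.2.le⟩

/-- Finite-time convergence from the differential inequality V' ≤ -c V^α, α ∈ (0,1). -/
theorem finite_time_convergence
    (c α : ℝ) (hc : 0 < c) (hα : α ∈ Set.Ioo (0:ℝ) 1)
    (V : ℝ → ℝ) (hVdiff : Differentiable ℝ V)
    (hVnonneg : ∀ t, 0 ≤ t → 0 ≤ V t)
    (hineq : ∀ t, 0 ≤ t → 0 < V t → deriv V t ≤ -c * V t ^ α) :
    ∀ t, V 0 ^ (1 - α) / (c * (1 - α)) ≤ t → V t = 0 := by
  intro t ht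
  have hk : 0 < c * (1 - α) := mul_pos hc (by linarith [hα.2])
  have hV0 : V 0 ^ (1 - α) ≤ c * (1 - α) * t := (div_le_iff₀' hk).1 ht
  have ht0 : 0 ≤ t := (div_nonneg (Real.rpow_nonneg (hVnonneg 0 le_rfl) _) hk.le).trans ht
  by_contra hVt
  obtain ⟨s, hs, hs_start, hs_last⟩ :=
    exists_eq_left_or_eq_zero_forall_Ioo_ne_zero hVdiff.continuous ht0
  have hpos : ∀ u ∈ Ioo s t, 0 < V u := fun u hu =>
    (hVnonneg u (hs.1.trans hu.1.le)).lt_of_ne' (hs_last u hu)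
  have hdecay := antitoneOn_rpow_add_mul_of_deriv_le hα.2.le hVdiff.continuous.continuousOn
    hVdiff.differentiableOn hpos (fun u hu => hineq u (hs.1.trans hu.1.le) (hpos u hu))
    (left_mem_Icc.2 hs.2) (right_mem_Icc.2 hs.2) hs.2
  have hstart : V s ^ (1 - α) + c * (1 - α) * s ≤ c * (1 - α) * t := by
    rcases hs_start with rfl | hVs
    · simpa using hV0
    · rw [hVs, Real.zero_rpow (by linarith [hα.2]), zero_add]
      exact mul_le_mul_of_nonneg_left hs.2 hk.le
  have hVt_pos : 0 < V t ^ (1 - α) :=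
    Real.rpow_pos_of_pos ((hVnonneg t ht0).lt_of_ne' hVt) _
  simp only at hdecay
  linarith
end

section
/- Let V : ℝ≥0 → ℝ≥0 be continuous, differentiable wherever positive, and let c > 0, α ∈ (0,1), V̄ > 0 satisfy: V'(t) ≤ -c·V(t)^α whenever t > Φ̄ and V(t) ≥ V̄ (for some Φ̄ ≥ 0). Then limsup_{t→∞} V(t) ≤ V̄, and moreover there exists T such that V(t) < V̄ for all t > T (once V drops strictly below V̄ after time Φ̄ it can never return to V̄, since at any time with V(t) = V̄ the derivative is ≤ -c·V̄^α < 0). -/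
/-!
Past time `Φ`, the derivative of `V` is at most `-c V̄^α < 0` wherever `V ≥ V̄`. Hence `V` cannot
stay above `V̄` forever, since it would then decrease at a linear rate. Nor can it climb back to
`V̄` once below it: on `[t₀, t]` a maximum lying at or above `V̄` is attained at some point after
`t₀`, where the left-hand derivative would have to be nonnegative.
-/

open Filter Set

theorem IsMaxOn.hasDerivWithinAt_Icc_right_nonneg {f : ℝ → ℝ} {a b f' : ℝ} (hab : a < b)
    (hmax : IsMaxOn f (Icc a b) b) (hf : HasDerivWithinAt f f' (Icc a b) b) : 0 ≤ f' := by
  have hcone : a - b ∈ posTangentConeAt (Icc a b) b :=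
    sub_mem_posTangentConeAt_of_segment_subset (by rw [segment_symm, segment_eq_Icc hab.le])
  have hle : (a - b) * f' ≤ 0 := by
    simpa [mul_comm] using hmax.localize.hasFDerivWithinAt_nonpos hf hcone
  exact nonneg_of_mul_nonpos_right hle (sub_neg.2 hab)

theorem lt_of_left_lt_of_deriv_neg {f : ℝ → ℝ} {a b L : ℝ} (hab : a ≤ b)
    (hf : ContinuousOn f (Icc a b)) (ha : f a < L)
    (hdiff : ∀ x ∈ Ioc a b, L ≤ f x → DifferentiableAt ℝ f x)
    (hderiv : ∀ x ∈ Ioc a b, L ≤ f x → deriv f x < 0) : f b < L := by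
  obtain ⟨m, hm, hmax⟩ := isCompact_Icc.exists_isMaxOn (nonempty_Icc.2 hab) hf
  by_contra! hb
  have hLm : L ≤ f m := hb.trans (hmax (right_mem_Icc.2 hab))
  have ham : a < m := hm.1.lt_of_ne (by rintro rfl; exact ha.not_ge hLm)
  have hm' : m ∈ Ioc a b := ⟨ham, hm.2⟩
  have hnonneg : 0 ≤ deriv f m :=
    (hmax.on_subset (Icc_subset_Icc_right hm.2)).hasDerivWithinAt_Icc_right_nonneg ham
      (hdiff m hm' hLm).hasDerivAt.hasDerivWithinAt
  exact (hderiv m hm' hLm).not_ge hnonneg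

theorem exists_gt_lt_of_deriv_le_neg {f : ℝ → ℝ} {a L δ : ℝ} (hδ : 0 < δ)
    (hf : ContinuousOn f (Ici a))
    (hdiff : ∀ x > a, L ≤ f x → DifferentiableAt ℝ f x)
    (hderiv : ∀ x > a, L ≤ f x → deriv f x ≤ -δ) : ∃ x > a, f x < L := by
  by_contra! hL
  have hdecay : ∀ y ≥ a, f y - f a ≤ -δ * (y - a) := by
    refine fun y hy ↦ (convex_Ici a).image_sub_le_mul_sub_of_deriv_le hf ?_ ?_ a self_mem_Ici
      y hy hy <;> rw [interior_Ici]
    · exact fun x hx ↦ (hdiff x hx (hL x hx)).differentiableWithinAt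
    · exact fun x hx ↦ hderiv x hx (hL x hx)
  set y := a + (|f a - L| + 1) / δ
  have hδy : δ * (y - a) = |f a - L| + 1 := by
    rw [add_sub_cancel_left, mul_div_cancel₀ _ hδ.ne']
  have hya : a < y := by linarith [div_pos (by positivity : 0 < |f a - L| + 1) hδ]
  linarith [hdecay y hya.le, hL y hya, le_abs_self (f a - L)]

/-- Attractivity/invariance of the sublevel set {V < V̄}: if V' ≤ -c V^α on the
superlevel set {V ≥ V̄} for times past Φ̄, then V eventually enters and remains
strictly below V̄, and in particular limsup V ≤ V̄. -/
theorem sublevel_attractive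
    (c α Vbar Φ : ℝ) (hc : 0 < c) (hα : α ∈ Set.Ioo (0:ℝ) 1)
    (hVbar : 0 < Vbar) (hΦ : 0 ≤ Φ)
    (V : ℝ → ℝ) (hVcont : ContinuousOn V (Set.Ici 0))
    (hVnonneg : ∀ t, 0 ≤ t → 0 ≤ V t)
    (hVdiff : ∀ t, 0 ≤ t → 0 < V t → DifferentiableAt ℝ V t)
    (hineq : ∀ t, Φ < t → Vbar ≤ V t → deriv V t ≤ -c * V t ^ α) :
    limsup V atTop ≤ Vbar ∧ ∃ T : ℝ, ∀ t, T < t → V t < Vbar := by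
  have hδ : 0 < c * Vbar ^ α := by positivity
  have hcont : ContinuousOn V (Ici Φ) := hVcont.mono (Ici_subset_Ici.2 hΦ)
  have hdiff : ∀ t > Φ, Vbar ≤ V t → DifferentiableAt ℝ V t :=
    fun t ht hV ↦ hVdiff t (hΦ.trans ht.le) (hVbar.trans_le hV)
  have hderiv : ∀ t > Φ, Vbar ≤ V t → deriv V t ≤ -(c * Vbar ^ α) := by
    intro t ht hV
    have : Vbar ^ α ≤ V t ^ α := Real.rpow_le_rpow hVbar.le hV hα.1.le
    nlinarith [hineq t ht hV]
  obtain ⟨t₀, ht₀, hVt₀⟩ := exists_gt_lt_of_deriv_le_neg hδ hcont hdiff hderiv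
  have hstay : ∀ t, t₀ < t → V t < Vbar := fun t ht ↦
    lt_of_left_lt_of_deriv_neg ht.le (hcont.mono (Icc_subset_Ici_iff ht.le |>.2 ht₀.le)) hVt₀
      (fun x hx ↦ hdiff x (ht₀.trans hx.1))
      (fun x hx hV ↦ (hderiv x (ht₀.trans hx.1) hV).trans_lt (neg_neg_of_pos hδ))
  have hbdd : IsCoboundedUnder (· ≤ ·) atTop V :=
    isCoboundedUnder_le_of_eventually_le atTop ((eventually_ge_atTop 0).mono hVnonneg)
  exact ⟨limsup_le_of_le hbdd ((eventually_gt_atTop t₀).mono fun t ht ↦ (hstay t ht).le),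
    t₀, hstay⟩
end

section
/- Let c, α, C₁ > 0 with α ∈ (0,1), β ∈ [0,1), and Φ̄ ≥ 0. Suppose V : ℝ≥0 → ℝ≥0 is differentiable, satisfies V'(t) ≤ C₁·V(t)^β for t ∈ [0, Φ̄], and V'(t) ≤ -c·V(t)^α for t > Φ̄ whenever V(t) > 0. Then V(t) = 0 for all t ≥ T₀ where T₀ = Φ̄ + (V(0)^(1-β) + (1-β)·C₁·Φ̄)^((1-α)/(1-β)) / (c·(1-α)). -/
/-! Where `V > 0`, the inequality `V' ≤ K V^γ` with `γ < 1` says exactly that `V^(1-γ)` grows at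
rate at most `(1-γ) K`. With `K = C₁`, `γ = β` this bounds `V(Φ̄)^(1-β)` by
`V(0)^(1-β) + (1-β) C₁ Φ̄`. With `K = -c`, `γ = α`, on the interval from the last zero of `V`
before `t` (or from `Φ̄` if there is none) up to `t`, `V^(1-α)` decreases at rate `c(1-α)`, so
it is already `0` at `t` once `t ≥ Φ̄ + V(Φ̄)^(1-α)/(c(1-α))`. -/

open Set Filter Topology

theorem rpow_one_sub_le_of_deriv_le_mul_rpow {V : ℝ → ℝ} {a b K γ : ℝ} (hγ : γ < 1)
    (hab : a ≤ b) (hcont : ContinuousOn V (Icc a b)) (hdiff : DifferentiableOn ℝ V (Ioo a b))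
    (hpos : ∀ x ∈ Ioo a b, 0 < V x) (hderiv : ∀ x ∈ Ioo a b, deriv V x ≤ K * V x ^ γ) :
    V b ^ (1 - γ) ≤ V a ^ (1 - γ) + (1 - γ) * K * (b - a) := by
  have hγ' : 0 < 1 - γ := sub_pos.mpr hγ
  have hW : ∀ x ∈ Ioo a b,
      HasDerivAt (fun y => V y ^ (1 - γ)) (deriv V x * (1 - γ) * V x ^ (1 - γ - 1)) x :=
    fun x hx => ((hdiff.differentiableAt (Ioo_mem_nhds hx.1 hx.2)).hasDerivAt).rpow_const
      (Or.inl (hpos x hx).ne')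
  have hW_le : ∀ x ∈ interior (Icc a b), deriv (fun y => V y ^ (1 - γ)) x ≤ (1 - γ) * K := by
    rw [interior_Icc]
    intro x hx
    have hVx := hpos x hx
    have hcancel : V x ^ γ * V x ^ (1 - γ - 1) = 1 := by
      rw [← Real.rpow_add hVx]; norm_num
    rw [(hW x hx).deriv]
    calc deriv V x * (1 - γ) * V x ^ (1 - γ - 1)
        ≤ K * V x ^ γ * (1 - γ) * V x ^ (1 - γ - 1) := by
          gcongr
          exact hderiv x hx
      _ = (1 - γ) * K := by linear_combination ((1 - γ) * K) * hcancel
  have := (convex_Icc a b).image_sub_le_mul_sub_of_deriv_le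
    (hcont.rpow_const fun _ _ => Or.inr hγ'.le)
    (fun x hx => (hW x (by rwa [interior_Icc] at hx)).differentiableAt.differentiableWithinAt)
    hW_le a (left_mem_Icc.mpr hab) b (right_mem_Icc.mpr hab) hab
  linarith

theorem rpow_one_sub_le_of_deriv_le_mul_rpow_of_nonneg {V : ℝ → ℝ} {a b C β : ℝ}
    (hβ₀ : 0 ≤ β) (hβ : β < 1) (hC : 0 ≤ C) (hab : a ≤ b)
    (hcont : ContinuousOn V (Icc a b)) (hdiff : DifferentiableOn ℝ V (Ioo a b))
    (hnonneg : ∀ x ∈ Icc a b, 0 ≤ V x) (hderiv : ∀ x ∈ Ioo a b, deriv V x ≤ C * V x ^ β) :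
    V b ^ (1 - β) ≤ V a ^ (1 - β) + (1 - β) * C * (b - a) := by
  -- `V ^ (1 - β)` need not be differentiable where `V` vanishes, so pass through `V + δ`.
  have hδ : ∀ δ > 0, (V b + δ) ^ (1 - β) - (V a + δ) ^ (1 - β) ≤ (1 - β) * C * (b - a) := by
    intro δ hδ
    have := rpow_one_sub_le_of_deriv_le_mul_rpow (V := fun x => V x + δ) hβ hab
      (hcont.add continuousOn_const) (hdiff.add_const δ)
      (fun x hx => by have := hnonneg x (Ioo_subset_Icc_self hx); positivity)
      (fun x hx => by
        rw [deriv_add_const]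
        calc deriv V x ≤ C * V x ^ β := hderiv x hx
          _ ≤ C * (V x + δ) ^ β := by
            gcongr
            · exact hnonneg x (Ioo_subset_Icc_self hx)
            · linarith)
    linarith
  have hlim : Tendsto (fun δ => (V b + δ) ^ (1 - β) - (V a + δ) ^ (1 - β)) (𝓝[>] 0)
      (𝓝 ((V b + 0) ^ (1 - β) - (V a + 0) ^ (1 - β))) := by
    refine (Continuous.tendsto ?_ 0).mono_left nhdsWithin_le_nhds
    exact ((continuous_const.add continuous_id).rpow_const fun _ => Or.inr (by linarith)).sub
      ((continuous_const.add continuous_id).rpow_const fun _ => Or.inr (by linarith))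
  have := le_of_tendsto hlim (eventually_nhdsWithin_of_forall hδ)
  simp only [add_zero] at this
  linarith

theorem exists_last_zero_or_left {V : ℝ → ℝ} {a b : ℝ} (hab : a ≤ b)
    (hcont : ContinuousOn V (Icc a b)) :
    ∃ s ∈ Icc a b, (V s = 0 ∨ s = a) ∧ ∀ x ∈ Ioo s b, V x ≠ 0 := by
  set Z := Icc a b ∩ V ⁻¹' {0} ∪ {a}
  have hZ : IsCompact Z :=
    (isCompact_Icc.of_isClosed_subset (hcont.preimage_isClosed_of_isClosed isClosed_Icc
      isClosed_singleton) inter_subset_left).union isCompact_singleton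
  have hmem : sSup Z ∈ Z := hZ.sSup_mem ⟨a, Or.inr rfl⟩
  have hs : sSup Z ∈ Icc a b :=
    hmem.elim (·.1) fun h => by rw [mem_singleton_iff.mp h]; exact left_mem_Icc.mpr hab
  refine ⟨sSup Z, hs, hmem.imp (·.2) id, fun x hx hVx => hx.1.not_ge ?_⟩
  exact le_csSup hZ.bddAbove (Or.inl ⟨⟨hs.1.trans hx.1.le, hx.2.le⟩, hVx⟩)

theorem eq_zero_of_deriv_le_neg_mul_rpow {V : ℝ → ℝ} {a c α : ℝ} (hc : 0 < c) (hα : α < 1)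
    (hcont : ContinuousOn V (Ici a)) (hdiff : DifferentiableOn ℝ V (Ioi a))
    (hnonneg : ∀ x, a ≤ x → 0 ≤ V x)
    (hdecay : ∀ x, a < x → 0 < V x → deriv V x ≤ -c * V x ^ α) :
    ∀ t, a + V a ^ (1 - α) / (c * (1 - α)) ≤ t → V t = 0 := by
  intro t ht
  have hα' : 0 < 1 - α := sub_pos.mpr hα
  have hat : a ≤ t := le_trans (le_add_of_nonneg_right (by positivity [hnonneg a le_rfl])) ht
  obtain ⟨s, hs, hzero, hpos⟩ := exists_last_zero_or_left hat (hcont.mono Icc_subset_Ici_self)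
  have hpos' : ∀ x ∈ Ioo s t, 0 < V x := fun x hx =>
    (hnonneg x (hs.1.trans hx.1.le)).lt_of_ne' (hpos x hx)
  have hbudget : V s ^ (1 - α) ≤ c * (1 - α) * (t - s) := by
    rcases hzero with hVs | rfl
    · rw [hVs, Real.zero_rpow hα'.ne']
      have := hs.2
      positivity
    · have : V s ^ (1 - α) / (c * (1 - α)) ≤ t - s := by linarith
      rwa [div_le_iff₀' (by positivity)] at this
  have := rpow_one_sub_le_of_deriv_le_mul_rpow hα hs.2
    (hcont.mono (Icc_subset_Ici_self.trans (Ici_subset_Ici.mpr hs.1)))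
    (hdiff.mono fun x hx => hs.1.trans_lt hx.1) hpos'
    (fun x hx => hdecay x (hs.1.trans_lt hx.1) (hpos' x hx))
  have hVt : V t ^ (1 - α) ≤ 0 := by linarith
  by_contra hne
  exact (Real.rpow_pos_of_pos ((hnonneg t hat).lt_of_ne' hne) _).not_ge hVt

/-- Convergence-time bound: sublinear growth on [0, Φ̄] followed by the decay
inequality V' ≤ -c V^α forces V to vanish after time
T₀ = Φ̄ + (V(0)^(1-β) + (1-β)C₁Φ̄)^((1-α)/(1-β)) / (c(1-α)). -/
theorem convergence_time_bound
    (c α C₁ β Φ : ℝ) (hc : 0 < c) (hC₁ : 0 < C₁)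
    (hα : α ∈ Set.Ioo (0:ℝ) 1) (hβ : β ∈ Set.Ico (0:ℝ) 1) (hΦ : 0 ≤ Φ)
    (V : ℝ → ℝ) (hVdiff : Differentiable ℝ V)
    (hVnonneg : ∀ t, 0 ≤ t → 0 ≤ V t)
    (hgrow : ∀ t ∈ Set.Icc 0 Φ, deriv V t ≤ C₁ * V t ^ β)
    (hdecay : ∀ t, Φ < t → 0 < V t → deriv V t ≤ -c * V t ^ α) :
    ∀ t, Φ + (V 0 ^ (1 - β) + (1 - β) * C₁ * Φ) ^ ((1 - α) / (1 - β)) / (c * (1 - α)) ≤ t →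
      V t = 0 := by
  intro t ht
  have hβ' : 0 < 1 - β := sub_pos.mpr hβ.2
  have hα' : 0 < 1 - α := sub_pos.mpr hα.2
  have hVΦ : V Φ ^ (1 - β) ≤ V 0 ^ (1 - β) + (1 - β) * C₁ * Φ := by
    simpa using rpow_one_sub_le_of_deriv_le_mul_rpow_of_nonneg hβ.1 hβ.2 hC₁.le hΦ
      hVdiff.continuous.continuousOn hVdiff.differentiableOn (fun x hx => hVnonneg x hx.1)
      (fun x hx => hgrow x (Ioo_subset_Icc_self hx))
  have hVΦα : V Φ ^ (1 - α) ≤ (V 0 ^ (1 - β) + (1 - β) * C₁ * Φ) ^ ((1 - α) / (1 - β)) :=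
    calc V Φ ^ (1 - α) = (V Φ ^ (1 - β)) ^ ((1 - α) / (1 - β)) := by
          rw [← Real.rpow_mul (hVnonneg Φ hΦ), mul_div_cancel₀ _ hβ'.ne']
      _ ≤ _ := Real.rpow_le_rpow (by positivity [hVnonneg Φ hΦ]) hVΦ (by positivity)
  refine eq_zero_of_deriv_le_neg_mul_rpow hc hα.2 hVdiff.continuous.continuousOn
    hVdiff.differentiableOn (fun x hx => hVnonneg x (hΦ.trans hx)) hdecay t (le_trans ?_ ht)
  gcongr
end
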